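/- If there exists a separable LMP (with countable label set) whose Zhou ordinal equals α + 1, then there exists a separable LMP 𝕊' (with countable label set) whose Zhou ordinal satisfies Z(𝕊') ≥ α + 2. -/

import Mathlib

open MeasureTheory

/-- A labelled Markov process over the measurable space `S` with label set `L`:
each `τ a` is a Markov kernel, i.e. `τ a s` is a subprobability measure for each state `s`,
and `s ↦ τ a s E` is measurable for each measurable `E`. -/
structure LMP (S : Type*) (L : Type*) [MeasurableSpace S] where
  τ : L → S → Measure S
  prob_le_one : ∀ (a : L) (s : S), τ a s Set.univ ≤ 1
  measurable_eval : ∀ (a : L) (E : Set S), MeasurableSet E → Measurable fun s => τ a s E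

namespace LMP

variable {S L : Type*} [MeasurableSpace S]

/-- `A` is `R`-closed: anything related to a point of `A` lies in `A`. -/
def RClosed (R : Set (S × S)) (A : Set S) : Prop :=
  ∀ ⦃x⦄, x ∈ A → ∀ ⦃s⦄, (x, s) ∈ R → s ∈ A

/-- `Σ(R)`: the family of measurable `R`-closed sets. -/
def sigmaCl (R : Set (S × S)) : Set (Set S) :=
  {A | MeasurableSet A ∧ RClosed R A}

/-- `R(Λ)`: the relation identifying states belonging to exactly the same members of `Λ`. -/
def rel (Λ : Set (Set S)) : Set (S × S) :=
  {p | ∀ A ∈ Λ, p.1 ∈ A ↔ p.2 ∈ A}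

/-- `R^T(Λ)`: states assigning the same probabilities to every member of `Λ`, for all labels. -/
def relT (M : LMP S L) (Λ : Set (Set S)) : Set (S × S) :=
  {p | ∀ (a : L), ∀ E ∈ Λ, M.τ a p.1 E = M.τ a p.2 E}

/-- The operator `𝒪`. -/
def Oop (M : LMP S L) (R : Set (S × S)) : Set (S × S) :=
  M.relT (sigmaCl R)

/-- The operator `𝒢`. -/
def Gop (M : LMP S L) (Λ : Set (Set S)) : Set (Set S) :=
  sigmaCl (M.relT Λ)

/-- The members of the σ-algebra generated by a family of sets. -/
def sigmaGen (U : Set (Set S)) : Set (Set S) :=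
  {A | MeasurableSet[MeasurableSpace.generateFrom U] A}

/-- Transfinite iterates of `𝒪`. -/
noncomputable def Oiter (M : LMP S L) (R : Set (S × S)) (α : Ordinal) : Set (S × S) :=
  Ordinal.limitRecOn α R (fun _ prev => M.Oop prev)
    (fun o _ ih => ⋂ (o' : Ordinal) (h : o' < o), ih o' h)

/-- Transfinite iterates of `𝒢`. -/
noncomputable def Giter (M : LMP S L) (Λ : Set (Set S)) (α : Ordinal) : Set (Set S) :=
  Ordinal.limitRecOn α Λ (fun _ prev => M.Gop prev)
    (fun o _ ih => sigmaGen (⋃ (o' : Ordinal) (h : o' < o), ih o' h))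

/-- `Λ` is a sub-σ-algebra of the ambient σ-algebra. -/
structure IsSubSigmaAlgebra (Λ : Set (Set S)) : Prop where
  subset_meas : ∀ A ∈ Λ, MeasurableSet A
  empty_mem : (∅ : Set S) ∈ Λ
  compl_mem : ∀ A ∈ Λ, Aᶜ ∈ Λ
  iUnion_mem : ∀ f : ℕ → Set S, (∀ n, f n ∈ Λ) → (⋃ n, f n) ∈ Λ

/-- A family `Λ` is stable w.r.t. the process. -/
def Stable (M : LMP S L) (Λ : Set (Set S)) : Prop :=
  ∀ A ∈ Λ, ∀ q : ℚ, 0 ≤ q → q ≤ 1 → ∀ a : L,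
    {s : S | ENNReal.ofReal (q : ℝ) < M.τ a s A} ∈ Λ

/-- A state bisimulation: a symmetric relation such that related states agree on
all measurable `R`-closed sets. -/
def IsStateBisim (M : LMP S L) (R : Set (S × S)) : Prop :=
  (∀ p ∈ R, (p.2, p.1) ∈ R) ∧
    ∀ p ∈ R, ∀ (a : L), ∀ C ∈ sigmaCl R, M.τ a p.1 C = M.τ a p.2 C

/-- State bisimilarity. -/
def stateBisim (M : LMP S L) : Set (S × S) :=
  {p | ∃ R, M.IsStateBisim R ∧ p ∈ R}

/-- Event bisimilarity: related by `R(Λ)` for some stable sub-σ-algebra `Λ`. -/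
def eventBisim (M : LMP S L) : Set (S × S) :=
  {p | ∃ Λ : Set (Set S), IsSubSigmaAlgebra Λ ∧ M.Stable Λ ∧ p ∈ rel Λ}

/-- Formulas of the modal logic `𝓛`. -/
inductive LForm (L : Type*) : Type _
  | top : LForm L
  | and : LForm L → LForm L → LForm L
  | dia : L → {q : ℚ // 0 ≤ q ∧ q < 1} → LForm L → LForm L

/-- Semantics of the logic `𝓛`. -/
def sem (M : LMP S L) : LForm L → Set S
  | LForm.top => Set.univ
  | LForm.and φ ψ => M.sem φ ∩ M.sem ψ
  | LForm.dia a q φ => {s | ENNReal.ofReal ((q : ℚ) : ℝ) < M.τ a s (M.sem φ)}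

/-- `σ(⟦𝓛⟧)`: the σ-algebra generated by the sets definable in the logic. -/
def sigmaLogic (M : LMP S L) : Set (Set S) :=
  sigmaGen (Set.range M.sem)

end LMP

/-- A measurable space is separable if its σ-algebra is countably generated and
separates points. -/
def SeparableMeasurableSpace (S : Type*) [m : MeasurableSpace S] : Prop :=
  (∃ U : Set (Set S), U.Countable ∧ MeasurableSpace.generateFrom U = m) ∧
    ∀ s t : S, s ≠ t → ∃ A : Set S, MeasurableSet A ∧ s ∈ A ∧ t ∉ A

namespace LMP

/-- `ζ` is the Zhou ordinal of `M`: the least ordinal `α` such that `𝒪^α(∼e) = ∼s`. -/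
def IsZhou {S L : Type*} [MeasurableSpace S] (M : LMP S L) (ζ : Ordinal) : Prop :=
  M.Oiter M.eventBisim ζ = M.stateBisim ∧
    ∀ β < ζ, M.Oiter M.eventBisim β ≠ M.stateBisim

end LMP

/-- A labelled Markov process bundled together with its state space and a countable
label set. -/
structure PackedLMP : Type 1 where
  S : Type
  mS : MeasurableSpace S
  L : Type
  cL : Countable L
  M : @LMP S L mS

namespace PackedLMP

/-- The bundled LMP is separable. -/
def Separable (P : PackedLMP) : Prop :=
  letI := P.mS; SeparableMeasurableSpace P.S

/-- `ζ` is the Zhou ordinal of the bundled LMP. -/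
def IsZhou (P : PackedLMP) (ζ : Ordinal.{0}) : Prop :=
  letI := P.mS; LMP.IsZhou P.M ζ

end PackedLMP

/-- The set of Zhou ordinals of separable LMPs. -/
def zhouOrdinals : Set Ordinal.{0} :=
  {ζ | ∃ P : PackedLMP, P.Separable ∧ P.IsZhou ζ}

/-!
Pick `(s₀, t₀) ∈ 𝒪^α(∼e)` separated at the last step, say `τ_a(t₀, E) < τ_a(s₀, E)` for some
`𝒪^α(∼e)`-closed `E`. Adjoin two fresh states and a fresh label sending them surely to `s₀` and
`t₀`. The iterates `𝒪^β(∼e)` do not change on the old states, and never relate an old state to a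
fresh one (only fresh states move under the fresh label). So the fresh states are related by
`𝒪^(α+1)(∼e)`, but not by `𝒪^(α+2)(∼e)`, which sees the closed set of states reaching `E` under
`a` with probability above `τ_a(t₀, E)`; as the iterates decrease and contain `∼s`, the new Zhou
ordinal exceeds `α + 1`.

That the iterates decrease rests on `𝒪(∼e) ⊆ ∼e`, which follows from `∼e = R(⟦𝓛⟧)`: every stable
sub-σ-algebra contains `⟦𝓛⟧`, and `σ(⟦𝓛⟧)` is stable by a π-λ argument.
-/

open Set MeasurableSpace

theorem measurable_of_ofReal_rat_lt {T : Type*} [MeasurableSpace T] {f : T → ENNReal}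
    (hf : ∀ x, f x ≤ 1)
    (h : ∀ q : {q : ℚ // 0 ≤ q ∧ q < 1}, MeasurableSet {x | ENNReal.ofReal (q : ℚ) < f x}) :
    Measurable f := by
  refine measurable_of_Ioi fun r => ?_
  have hunion : f ⁻¹' Ioi r = ⋃ (q : {q : ℚ // 0 ≤ q ∧ q < 1}) (_ : r < ENNReal.ofReal (q : ℚ)),
      {x | ENNReal.ofReal (q : ℚ) < f x} := by
    ext x
    simp only [mem_preimage, mem_Ioi, mem_iUnion, mem_ofPred_eq, exists_prop]
    constructor
    · intro hx
      obtain ⟨q, hq0, hrq, hqf⟩ := ENNReal.lt_iff_exists_rat_btwn.mp hx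
      have hq1 : q < 1 := by exact_mod_cast ENNReal.ofReal_lt_one.mp (hqf.trans_le (hf x))
      exact ⟨⟨q, hq0, hq1⟩, hrq, hqf⟩
    · rintro ⟨q, hrq, hqf⟩
      exact hrq.trans hqf
  rw [hunion]
  exact .iUnion fun q => .iUnion fun _ => h q

namespace SeparableMeasurableSpace

theorem of_countable (T : Type*) [MeasurableSpace T] [Countable T] [MeasurableSingletonClass T] :
    SeparableMeasurableSpace T := by
  obtain ⟨U, hUc, hU⟩ := CountablyGenerated.isCountablyGenerated (α := T)
  exact ⟨⟨U, hUc, hU.symm⟩, fun s t hst => ⟨{s}, .singleton s, rfl, Ne.symm hst⟩⟩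

theorem sum {S T : Type*} [mS : MeasurableSpace S] [mT : MeasurableSpace T]
    (hS : SeparableMeasurableSpace S) (hT : SeparableMeasurableSpace T) :
    SeparableMeasurableSpace (S ⊕ T) := by
  obtain ⟨⟨U, hUc, hU⟩, hSsep⟩ := hS
  obtain ⟨⟨V, hVc, hV⟩, hTsep⟩ := hT
  set G : Set (Set (S ⊕ T)) := insert (range Sum.inl) (image Sum.inl '' U ∪ image Sum.inr '' V)
  have hG : ∀ A ∈ G, MeasurableSet A := by
    rintro _ (rfl | ⟨A, hA, rfl⟩ | ⟨A, hA, rfl⟩)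
    · exact measurableSet_range_inl
    · exact measurableSet_inl_image.mpr (hU ▸ measurableSet_generateFrom hA)
    · exact measurableSet_inr_image.mpr (hV ▸ measurableSet_generateFrom hA)
  have hinl : mS ≤ (generateFrom G).comap Sum.inl := by
    rw [comap_generateFrom, ← hU]
    refine generateFrom_mono fun A hA => ⟨_, Or.inr (Or.inl ⟨A, hA, rfl⟩), ?_⟩
    exact preimage_image_eq _ Sum.inl_injective
  have hinr : mT ≤ (generateFrom G).comap Sum.inr := by
    rw [comap_generateFrom, ← hV]
    refine generateFrom_mono fun A hA => ⟨_, Or.inr (Or.inr ⟨A, hA, rfl⟩), ?_⟩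
    exact preimage_image_eq _ Sum.inr_injective
  refine ⟨⟨G, ((hUc.image _).union (hVc.image _)).insert _,
    le_antisymm (generateFrom_le hG) fun E hE => ?_⟩, ?_⟩
  · obtain ⟨B₁, hB₁, hB₁E⟩ := hinl _ (measurableSet_sum_iff.mp hE).1
    obtain ⟨B₂, hB₂, hB₂E⟩ := hinr _ (measurableSet_sum_iff.mp hE).2
    have hrange : MeasurableSet[generateFrom G] (range Sum.inl) :=
      measurableSet_generateFrom (mem_insert _ _)
    convert (hB₁.inter hrange).union (hB₂.diff hrange)
    ext (s | t)
    · simpa using (congrArg (s ∈ ·) hB₁E).symm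
    · simpa using (congrArg (t ∈ ·) hB₂E).symm
  · rintro (s | s) (t | t) hne
    · obtain ⟨A, hA, hsA, htA⟩ := hSsep s t (fun h => hne (congrArg _ h))
      exact ⟨_, measurableSet_inl_image.mpr hA, mem_image_of_mem _ hsA, by simpa using htA⟩
    · exact ⟨_, measurableSet_range_inl, mem_range_self s, by simp⟩
    · exact ⟨_, measurableSet_range_inr, mem_range_self s, by simp⟩
    · obtain ⟨A, hA, hsA, htA⟩ := hTsep s t (fun h => hne (congrArg _ h))
      exact ⟨_, measurableSet_inr_image.mpr hA, mem_image_of_mem _ hsA, by simpa using htA⟩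

end SeparableMeasurableSpace

universe u

namespace LMP

theorem rel_subset_rel_sigmaGen {S : Type*} (U : Set (Set S)) : rel U ⊆ rel (sigmaGen U) := by
  intro p hp A hA
  induction A, hA using MeasurableSpace.generateFrom_induction with
  | hC t ht => exact hp t ht
  | empty => simp
  | compl t _ iht => simp [iht]
  | iUnion f _ ihf => simp only [mem_iUnion]; exact exists_congr ihf

variable {S : Type u} {L : Type*} [mS : MeasurableSpace S]

namespace IsSubSigmaAlgebra

variable {Λ : Set (Set S)}

abbrev toMeasurableSpace (h : IsSubSigmaAlgebra Λ) : MeasurableSpace S where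
  MeasurableSet' := (· ∈ Λ)
  measurableSet_empty := h.empty_mem
  measurableSet_compl := h.compl_mem
  measurableSet_iUnion := h.iUnion_mem

theorem univ_mem (h : IsSubSigmaAlgebra Λ) : univ ∈ Λ :=
  @MeasurableSet.univ _ h.toMeasurableSpace

theorem inter_mem (h : IsSubSigmaAlgebra Λ) {A B : Set S} (hA : A ∈ Λ) (hB : B ∈ Λ) :
    A ∩ B ∈ Λ :=
  @MeasurableSet.inter S h.toMeasurableSpace A B hA hB

theorem of_le {m : MeasurableSpace S} (hm : m ≤ mS) :
    @IsSubSigmaAlgebra S mS {A | MeasurableSet[m] A} :=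
  @IsSubSigmaAlgebra.mk S mS _ (fun _ hA => hm _ hA) (@MeasurableSet.empty _ m)
    (fun _ hA => hA.compl) (fun _ hf => .iUnion hf)

end IsSubSigmaAlgebra

theorem isSubSigmaAlgebra_sigmaCl {R : Set (S × S)} (hR : ∀ p ∈ R, (p.2, p.1) ∈ R) :
    IsSubSigmaAlgebra (sigmaCl R) where
  subset_meas _ hA := hA.1
  empty_mem := ⟨.empty, fun _ hx => hx.elim⟩
  compl_mem _ hA := ⟨hA.1.compl, fun x hx s hs hsA => hx (hA.2 hsA (hR _ hs))⟩
  iUnion_mem _ hf := ⟨.iUnion fun n => (hf n).1, fun x hx s hs => by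
    obtain ⟨n, hxn⟩ := mem_iUnion.mp hx
    exact mem_iUnion.mpr ⟨n, (hf n).2 hxn hs⟩⟩

theorem sigmaCl_anti {R R' : Set (S × S)} (h : R ⊆ R') : sigmaCl R' ⊆ sigmaCl R :=
  fun _ hA => ⟨hA.1, fun _ hx _ hs => hA.2 hx (h hs)⟩

section Sum

variable {T : Type*} [MeasurableSpace T] {R : Set (S × S)} {R' : Set ((S ⊕ T) × (S ⊕ T))}

theorem image_inl_mem_sigmaCl (hR : ∀ p u, (Sum.inl p, Sum.inl u) ∈ R' → (p, u) ∈ R)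
    (hcross : ∀ s t, (Sum.inl s, Sum.inr t) ∉ R') {E : Set S} (hE : E ∈ sigmaCl R) :
    Sum.inl '' E ∈ sigmaCl R' := by
  refine ⟨measurableSet_inl_image.mpr hE.1, ?_⟩
  rintro _ ⟨e, he, rfl⟩ (w | t) hw
  · exact ⟨w, hE.2 he (hR e w hw), rfl⟩
  · exact (hcross e t hw).elim

theorem preimage_inl_mem_sigmaCl (hR : ∀ p u, (p, u) ∈ R → (Sum.inl p, Sum.inl u) ∈ R')
    {C : Set (S ⊕ T)} (hC : C ∈ sigmaCl R') : Sum.inl ⁻¹' C ∈ sigmaCl R :=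
  ⟨measurable_inl hC.1, fun e he w hw => hC.2 he (hR e w hw)⟩

end Sum

variable (M : LMP S L)

theorem relT_symm {Λ : Set (Set S)} : ∀ p ∈ M.relT Λ, (p.2, p.1) ∈ M.relT Λ :=
  fun _ hp a E hE => (hp a E hE).symm

theorem Oop_mono {R R' : Set (S × S)} (h : R ⊆ R') : M.Oop R ⊆ M.Oop R' :=
  fun _ hp a E hE => hp a E (sigmaCl_anti h hE)

theorem setOf_lt_mem_sigmaCl_Oop {R : Set (S × S)} {E : Set S} (hE : E ∈ sigmaCl R) (a : L)
    (r : ENNReal) : {s | r < M.τ a s E} ∈ sigmaCl (M.Oop R) :=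
  ⟨M.measurable_eval a E hE.1 measurableSet_Ioi, fun _ hx _ hs => by
    show r < _; rw [← hs a E hE]; exact hx⟩

theorem measure_le_one (a : L) (s : S) (E : Set S) : M.τ a s E ≤ 1 :=
  (measure_mono (subset_univ E)).trans (M.prob_le_one a s)

theorem measurable_τ (a : L) : Measurable (M.τ a) :=
  Measure.measurable_of_measurable_coe _ fun E hE => M.measurable_eval a E hE

theorem measurableSet_sem : ∀ φ : LForm L, MeasurableSet (M.sem φ)
  | .top => .univ
  | .and φ ψ => (measurableSet_sem φ).inter (measurableSet_sem ψ)
  | .dia a _ φ => M.measurable_eval a _ (measurableSet_sem φ) measurableSet_Ioi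

theorem sem_mem_of_stable {Λ : Set (Set S)} (hΛ : IsSubSigmaAlgebra Λ) (hst : M.Stable Λ) :
    ∀ φ : LForm L, M.sem φ ∈ Λ
  | .top => hΛ.univ_mem
  | .and φ ψ => hΛ.inter_mem (sem_mem_of_stable hΛ hst φ) (sem_mem_of_stable hΛ hst ψ)
  | .dia a q φ => hst _ (sem_mem_of_stable hΛ hst φ) q.1 q.2.1 q.2.2.le a

theorem generateFrom_range_sem_le : generateFrom (range M.sem) ≤ mS :=
  generateFrom_le <| forall_mem_range.mpr M.measurableSet_sem

theorem isPiSystem_range_sem : IsPiSystem (range M.sem) := by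
  rintro _ ⟨φ, rfl⟩ _ ⟨ψ, rfl⟩ -
  exact ⟨φ.and ψ, rfl⟩

theorem measurable_τ_sem (a : L) (φ : LForm L) :
    Measurable[generateFrom (range M.sem)] fun s => M.τ a s (M.sem φ) :=
  @measurable_of_ofReal_rat_lt S (generateFrom (range M.sem)) _
    (fun s => M.measure_le_one a s _) fun q => measurableSet_generateFrom ⟨.dia a q φ, rfl⟩

theorem measurable_τ_of_mem_sigmaLogic (a : L) {A : Set S} (hA : A ∈ M.sigmaLogic) :
    Measurable[generateFrom (range M.sem)] fun s => M.τ a s A := by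
  have hle := M.generateFrom_range_sem_le
  have : ∀ s, IsFiniteMeasure (M.τ a s) :=
    fun s => ⟨(M.prob_le_one a s).trans_lt ENNReal.one_lt_top⟩
  have hbasic : ∀ B ∈ range M.sem,
      Measurable[generateFrom (range M.sem)] fun s => (M.τ a s).trim hle B := by
    rintro _ ⟨φ, rfl⟩
    simpa only [trim_measurableSet_eq hle (measurableSet_generateFrom ⟨φ, rfl⟩)]
      using M.measurable_τ_sem a φ
  have htrim : Measurable[generateFrom (range M.sem)] fun s => (M.τ a s).trim hle :=
    @Measurable.measure_of_isPiSystem S S (generateFrom (range M.sem)) (generateFrom (range M.sem))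
      _ _ _ rfl M.isPiSystem_range_sem hbasic (hbasic _ ⟨.top, rfl⟩)
  have hcoe := (@Measure.measurable_coe S (generateFrom (range M.sem)) A hA).comp htrim
  simpa only [Function.comp_def, trim_measurableSet_eq hle hA] using hcoe

theorem isSubSigmaAlgebra_sigmaLogic : IsSubSigmaAlgebra M.sigmaLogic :=
  IsSubSigmaAlgebra.of_le M.generateFrom_range_sem_le

theorem stable_sigmaLogic : M.Stable M.sigmaLogic :=
  fun _ hA _ _ _ a => M.measurable_τ_of_mem_sigmaLogic a hA measurableSet_Ioi

theorem eventBisim_eq_rel_range_sem : M.eventBisim = rel (range M.sem) := by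
  refine subset_antisymm ?_ fun p hp => ?_
  · rintro p ⟨Λ, hΛ, hst, hp⟩ _ ⟨φ, rfl⟩
    exact hp _ (M.sem_mem_of_stable hΛ hst φ)
  · exact ⟨M.sigmaLogic, M.isSubSigmaAlgebra_sigmaLogic, M.stable_sigmaLogic,
      rel_subset_rel_sigmaGen _ hp⟩

theorem Oop_rel_range_sem_subset : M.Oop (rel (range M.sem)) ⊆ rel (range M.sem) := by
  rintro p hp _ ⟨φ, rfl⟩
  induction φ with
  | top => simp [sem]
  | and φ ψ ihφ ihψ => exact and_congr ihφ ihψ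
  | dia a q φ ih =>
    have hcl : M.sem φ ∈ sigmaCl (rel (range M.sem)) :=
      ⟨M.measurableSet_sem φ, fun _ hx _ hs => (hs _ ⟨φ, rfl⟩).mp hx⟩
    simp only [sem, mem_ofPred_eq, hp a _ hcl]

theorem Oop_eventBisim_subset : M.Oop M.eventBisim ⊆ M.eventBisim := by
  rw [eventBisim_eq_rel_range_sem]
  exact M.Oop_rel_range_sem_subset

theorem Oiter_zero (R : Set (S × S)) : M.Oiter R 0 = R :=
  Ordinal.limitRecOn_zero _ _ _

theorem Oiter_add_one (R : Set (S × S)) (β : Ordinal) :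
    M.Oiter R (β + 1) = M.Oop (M.Oiter R β) :=
  Ordinal.limitRecOn_add_one _ _ _ _

theorem Oiter_limit (R : Set (S × S)) {β : Ordinal} (hβ : Order.IsSuccLimit β) :
    M.Oiter R β = ⋂ γ < β, M.Oiter R γ :=
  Ordinal.limitRecOn_limit _ _ _ _ hβ

variable {M}

theorem Oiter_symm {R : Set (S × S)} (hR : ∀ p ∈ R, (p.2, p.1) ∈ R) (β : Ordinal) :
    ∀ p ∈ M.Oiter R β, (p.2, p.1) ∈ M.Oiter R β := by
  induction β using Ordinal.limitRecOn with
  | zero => rwa [Oiter_zero]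
  | add_one β _ => rw [Oiter_add_one]; exact M.relT_symm
  | limit β hβ ih =>
    simp only [Oiter_limit _ _ hβ, mem_iInter]
    exact fun p hp γ hγ => ih γ hγ p (hp γ hγ)

theorem Oiter_subset_of_lt_limit (R : Set (S × S)) {β γ : Ordinal} (hβ : Order.IsSuccLimit β)
    (hγ : γ < β) : M.Oiter R β ⊆ M.Oiter R γ := by
  rw [Oiter_limit _ _ hβ]
  exact biInter_subset_of_mem hγ

theorem Oiter_add_one_subset {R : Set (S × S)} (hR : M.Oop R ⊆ R) (β : Ordinal) :
    M.Oiter R (β + 1) ⊆ M.Oiter R β := by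
  induction β using Ordinal.limitRecOn with
  | zero => rwa [Oiter_add_one, Oiter_zero]
  | add_one β ih =>
    rw [Oiter_add_one _ _ (β + 1)]
    exact (M.Oop_mono ih).trans_eq (Oiter_add_one ..).symm
  | limit β hβ ih =>
    refine subset_of_subset_of_eq (subset_iInter₂ fun γ hγ => ?_) (Oiter_limit _ _ hβ).symm
    rw [Oiter_add_one]
    exact (M.Oop_mono (Oiter_subset_of_lt_limit R hβ hγ)).trans_eq (Oiter_add_one ..).symm
      |>.trans (ih γ hγ)

theorem Oiter_anti {R : Set (S × S)} (hR : M.Oop R ⊆ R) : Antitone (M.Oiter R) := by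
  intro β γ hβγ
  induction γ using Ordinal.limitRecOn with
  | zero => rw [nonpos_iff_eq_zero.mp hβγ]
  | add_one γ ih =>
    rcases hβγ.lt_or_eq with hlt | rfl
    · exact (Oiter_add_one_subset hR γ).trans (ih (Order.lt_add_one_iff.mp hlt))
    · exact subset_rfl
  | limit γ hγ ih =>
    rcases hβγ.lt_or_eq with hlt | rfl
    · exact Oiter_subset_of_lt_limit R hγ hlt
    · exact subset_rfl

variable (M)

theorem eventBisim_symm : ∀ p ∈ M.eventBisim, (p.2, p.1) ∈ M.eventBisim :=
  fun _ ⟨Λ, hΛ, hst, hp⟩ => ⟨Λ, hΛ, hst, fun A hA => (hp A hA).symm⟩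

theorem Oiter_eventBisim_anti : Antitone (M.Oiter M.eventBisim) :=
  Oiter_anti M.Oop_eventBisim_subset

variable {M}

theorem IsStateBisim.subset_Oop {R : Set (S × S)} (hR : M.IsStateBisim R) : R ⊆ M.Oop R :=
  hR.2

theorem IsStateBisim.subset_eventBisim {R : Set (S × S)} (hR : M.IsStateBisim R) :
    R ⊆ M.eventBisim := fun p hp =>
  ⟨sigmaCl R, isSubSigmaAlgebra_sigmaCl hR.1,
    fun _ hA _ _ _ a => sigmaCl_anti hR.subset_Oop (M.setOf_lt_mem_sigmaCl_Oop hA a _),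
    fun _ hA => ⟨fun h => hA.2 h hp, fun h => hA.2 h (hR.1 p hp)⟩⟩

theorem IsStateBisim.subset_Oiter {R : Set (S × S)} (hR : M.IsStateBisim R) (β : Ordinal) :
    R ⊆ M.Oiter M.eventBisim β := by
  induction β using Ordinal.limitRecOn with
  | zero => rw [Oiter_zero]; exact hR.subset_eventBisim
  | add_one β ih => rw [Oiter_add_one]; exact hR.subset_Oop.trans (M.Oop_mono ih)
  | limit β hβ ih => rw [Oiter_limit _ _ hβ]; exact subset_iInter₂ ih

variable (M)

theorem stateBisim_subset_Oiter (β : Ordinal) : M.stateBisim ⊆ M.Oiter M.eventBisim β :=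
  fun _ ⟨_, hR, hp⟩ => hR.subset_Oiter β hp

theorem Oiter_eq_stateBisim_of_add_one_eq {β : Ordinal}
    (h : M.Oiter M.eventBisim (β + 1) = M.Oiter M.eventBisim β) :
    M.Oiter M.eventBisim β = M.stateBisim := by
  have hfix : M.Oiter M.eventBisim β ⊆ M.Oop (M.Oiter M.eventBisim β) := by rw [← Oiter_add_one, h]
  exact subset_antisymm (fun p hp => ⟨_, ⟨Oiter_symm M.eventBisim_symm β, hfix⟩, hp⟩)
    (M.stateBisim_subset_Oiter β)

theorem exists_Oiter_add_one_eq :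
    ∃ β : Ordinal.{u}, M.Oiter M.eventBisim (β + 1) = M.Oiter M.eventBisim β := by
  by_contra! hne
  have hanti : StrictAnti (M.Oiter M.eventBisim) := fun β γ hβγ =>
    ((M.Oiter_eventBisim_anti (Order.add_one_le_of_lt hβγ)).trans_ssubset
      (ssubset_of_subset_of_ne (Oiter_add_one_subset M.Oop_eventBisim_subset β) (hne β)))
  exact not_injective_of_ordinal _ hanti.injective

theorem exists_isZhou :
    ∃ ζ : Ordinal.{u}, M.IsZhou ζ := by
  obtain ⟨β, hβ⟩ := M.exists_Oiter_add_one_eq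
  obtain ⟨ζ, hζ, hmin⟩ := wellFounded_lt.has_min {γ | M.Oiter M.eventBisim γ = M.stateBisim}
    ⟨β, M.Oiter_eq_stateBisim_of_add_one_eq hβ⟩
  exact ⟨ζ, hζ, fun γ hγ hγζ => hmin γ hγζ hγ⟩

variable {M}

theorem IsZhou.lt_of_mem_Oiter {ζ β : Ordinal} (hζ : M.IsZhou ζ) {p : S × S}
    (hp : p ∈ M.Oiter M.eventBisim β) (hps : p ∉ M.stateBisim) : β < ζ := by
  by_contra! hle
  exact hps (hζ.1 ▸ M.Oiter_eventBisim_anti hle hp)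

theorem IsZhou.exists_τ_lt_of_add_one {α : Ordinal} (hζ : M.IsZhou (α + 1)) :
    ∃ s t : S, (s, t) ∈ M.Oiter M.eventBisim α ∧
      ∃ (a : L) (E : Set S), E ∈ sigmaCl (M.Oiter M.eventBisim α) ∧ M.τ a t E < M.τ a s E := by
  obtain ⟨⟨s, t⟩, hst, hsucc⟩ : ∃ p ∈ M.Oiter M.eventBisim α, p ∉ M.Oiter M.eventBisim (α + 1) := by
    rw [hζ.1]
    by_contra! h
    exact hζ.2 α (Order.lt_add_one_iff.mpr le_rfl) (subset_antisymm h (M.stateBisim_subset_Oiter α))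
  rw [Oiter_add_one] at hsucc
  obtain ⟨a, E, hE, hne⟩ : ∃ (a : L) (E : Set S), E ∈ sigmaCl (M.Oiter M.eventBisim α) ∧
      M.τ a s E ≠ M.τ a t E := by
    by_contra! h
    exact hsucc h
  rcases hne.lt_or_gt with hlt | hlt
  · exact ⟨t, s, Oiter_symm M.eventBisim_symm α _ hst, a, E, hE, hlt⟩
  · exact ⟨s, t, hst, a, E, hE, hlt⟩

variable (M) (s₀ t₀ : S)

/-- Two fresh states `inr true`, `inr false` and a fresh label under which they jump surely to
`s₀`, resp. `t₀`. -/
noncomputable def adjoinPair : LMP (S ⊕ Bool) (L ⊕ Unit) where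
  τ
    | .inl a => Sum.elim (fun s => (M.τ a s).map Sum.inl) 0
    | .inr _ => Sum.elim 0 fun b => Measure.dirac (.inl (cond b s₀ t₀))
  prob_le_one := by
    rintro (a | _) (s | b)
    · simpa [Measure.map_apply measurable_inl .univ] using M.prob_le_one a s
    all_goals simp
  measurable_eval := by
    rintro (a | _) E hE <;> refine (Measure.measurable_coe hE).comp (.sumElim ?_ ?_)
    · exact (Measure.measurable_map _ measurable_inl).comp (M.measurable_τ a)
    all_goals first | exact measurable_const | exact measurable_of_countable _

theorem adjoinPair_τ_inl_inl (a : L) (s : S) {E : Set (S ⊕ Bool)} (hE : MeasurableSet E) :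
    (M.adjoinPair s₀ t₀).τ (.inl a) (.inl s) E = M.τ a s (Sum.inl ⁻¹' E) :=
  Measure.map_apply measurable_inl hE

theorem adjoinPair_τ_inr_inl (u : Unit) (s : S) :
    (M.adjoinPair s₀ t₀).τ (.inr u) (.inl s) = 0 := rfl

theorem adjoinPair_τ_inr_inr (u : Unit) (b : Bool) :
    (M.adjoinPair s₀ t₀).τ (.inr u) (.inr b) = Measure.dirac (.inl (cond b s₀ t₀)) := rfl

theorem inl_inr_notMem_adjoinPair_eventBisim (s : S) (b : Bool) :
    (Sum.inl s, Sum.inr b) ∉ (M.adjoinPair s₀ t₀).eventBisim := by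
  rintro ⟨Λ, hΛ, hst, hrel⟩
  have hmem := hrel _ (hst univ hΛ.univ_mem 0 le_rfl zero_le_one (.inr ()))
  simp [adjoinPair_τ_inr_inl, adjoinPair_τ_inr_inr] at hmem

theorem inl_mem_adjoinPair_eventBisim_iff (p u : S) :
    (Sum.inl p, Sum.inl u) ∈ (M.adjoinPair s₀ t₀).eventBisim ↔ (p, u) ∈ M.eventBisim := by
  constructor
  · rintro ⟨Λ, hΛ, hst, hrel⟩
    refine ⟨{A | MeasurableSet[hΛ.toMeasurableSpace.comap Sum.inl] A},
      IsSubSigmaAlgebra.of_le ?_, ?_, ?_⟩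
    · exact MeasurableSpace.comap_le_iff_le_map.mpr fun E hE => measurable_inl (hΛ.subset_meas E hE)
    · rintro _ ⟨E, hE, rfl⟩ q hq0 hq1 a
      refine ⟨_, hst E hE q hq0 hq1 (.inl a), ?_⟩
      ext s
      simp [adjoinPair_τ_inl_inl _ _ _ _ _ (hΛ.subset_meas E hE)]
    · rintro _ ⟨E, hE, rfl⟩
      exact hrel E hE
  · rintro ⟨Λ, hΛ, hst, hrel⟩
    have hmeas : ∀ E : Set (S ⊕ Bool), Sum.inl ⁻¹' E ∈ Λ → MeasurableSet E :=
      fun E hE => measurableSet_sum_iff.mpr ⟨hΛ.subset_meas _ hE, .of_discrete⟩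
    refine ⟨{E | MeasurableSet[hΛ.toMeasurableSpace.map Sum.inl] E},
      IsSubSigmaAlgebra.of_le hmeas, ?_, fun E hE => hrel _ hE⟩
    rintro E hE q hq0 hq1 (a | _)
    · show Sum.inl ⁻¹' _ ∈ Λ
      simpa [preimage, adjoinPair_τ_inl_inl _ _ _ _ _ (hmeas E hE)] using hst _ hE q hq0 hq1 a
    · show Sum.inl ⁻¹' _ ∈ Λ
      simpa [preimage, adjoinPair_τ_inr_inl] using hΛ.empty_mem

variable {M s₀ t₀}

theorem inl_mem_adjoinPair_Oop_iff {R : Set (S × S)} {R' : Set ((S ⊕ Bool) × (S ⊕ Bool))}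
    (hR : ∀ p u, (Sum.inl p, Sum.inl u) ∈ R' ↔ (p, u) ∈ R)
    (hcross : ∀ s b, (Sum.inl s, Sum.inr b) ∉ R') (p u : S) :
    (Sum.inl p, Sum.inl u) ∈ (M.adjoinPair s₀ t₀).Oop R' ↔ (p, u) ∈ M.Oop R := by
  constructor
  · intro h a E hE
    have hE' := image_inl_mem_sigmaCl (fun p u => (hR p u).mp) hcross hE
    have := h (.inl a) _ hE'
    rwa [adjoinPair_τ_inl_inl _ _ _ _ _ hE'.1, adjoinPair_τ_inl_inl _ _ _ _ _ hE'.1,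
      preimage_image_eq _ Sum.inl_injective] at this
  · rintro h (a | _) C hC
    · rw [adjoinPair_τ_inl_inl _ _ _ _ _ hC.1, adjoinPair_τ_inl_inl _ _ _ _ _ hC.1]
      exact h a _ (preimage_inl_mem_sigmaCl (fun p u => (hR p u).mpr) hC)
    · rfl

theorem inl_inr_notMem_adjoinPair_Oiter (β : Ordinal) (s : S) (b : Bool) :
    (Sum.inl s, Sum.inr b) ∉ (M.adjoinPair s₀ t₀).Oiter (M.adjoinPair s₀ t₀).eventBisim β :=
  fun h => M.inl_inr_notMem_adjoinPair_eventBisim s₀ t₀ s b <| by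
    simpa only [Oiter_zero] using Oiter_eventBisim_anti _ (zero_le (a := β)) h

theorem inl_mem_adjoinPair_Oiter_iff (β : Ordinal) (p u : S) :
    (Sum.inl p, Sum.inl u) ∈ (M.adjoinPair s₀ t₀).Oiter (M.adjoinPair s₀ t₀).eventBisim β ↔
      (p, u) ∈ M.Oiter M.eventBisim β := by
  induction β using Ordinal.limitRecOn generalizing p u with
  | zero => simp only [Oiter_zero, inl_mem_adjoinPair_eventBisim_iff]
  | add_one β ih =>
    simp only [Oiter_add_one]
    exact inl_mem_adjoinPair_Oop_iff ih (inl_inr_notMem_adjoinPair_Oiter β) p u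
  | limit β hβ ih =>
    simp only [Oiter_limit _ _ hβ, mem_iInter]
    exact forall₂_congr fun γ hγ => ih γ hγ p u

theorem inr_mem_adjoinPair_Oiter_add_one {α : Ordinal} (h : (s₀, t₀) ∈ M.Oiter M.eventBisim α) :
    (Sum.inr true, Sum.inr false) ∈
      (M.adjoinPair s₀ t₀).Oiter (M.adjoinPair s₀ t₀).eventBisim (α + 1) := by
  rw [Oiter_add_one]
  rintro (a | u) C hC
  · rfl
  have h' := (inl_mem_adjoinPair_Oiter_iff (s₀ := s₀) (t₀ := t₀) α s₀ t₀).mpr h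
  have hiff : Sum.inl s₀ ∈ C ↔ Sum.inl t₀ ∈ C :=
    ⟨fun hs => hC.2 hs h', fun ht => hC.2 ht (Oiter_symm (eventBisim_symm _) α _ h')⟩
  by_cases hs : Sum.inl s₀ ∈ C <;>
    simp [adjoinPair_τ_inr_inr, Measure.dirac_apply' _ hC.1, hs, ← hiff]

theorem inr_notMem_adjoinPair_Oiter_add_two {α : Ordinal} {a : L} {E : Set S}
    (hE : E ∈ sigmaCl (M.Oiter M.eventBisim α)) (hlt : M.τ a t₀ E < M.τ a s₀ E) :
    (Sum.inr true, Sum.inr false) ∉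
      (M.adjoinPair s₀ t₀).Oiter (M.adjoinPair s₀ t₀).eventBisim (α + 1 + 1) := by
  have himage : Sum.inl '' E ∈
      sigmaCl ((M.adjoinPair s₀ t₀).Oiter (M.adjoinPair s₀ t₀).eventBisim α) :=
    image_inl_mem_sigmaCl (fun p u => (inl_mem_adjoinPair_Oiter_iff α p u).mp)
      (inl_inr_notMem_adjoinPair_Oiter α) hE
  have hC := (M.adjoinPair s₀ t₀).setOf_lt_mem_sigmaCl_Oop himage (.inl a) (M.τ a t₀ E)
  rw [← Oiter_add_one] at hC
  intro h
  rw [Oiter_add_one] at h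
  have := h (.inr ()) _ hC
  simp [adjoinPair_τ_inr_inr, Measure.dirac_apply' _ hC.1, indicator,
    adjoinPair_τ_inl_inl _ _ _ _ _ himage.1, preimage_image_eq _ Sum.inl_injective, hlt] at this

theorem add_two_le_of_isZhou_adjoinPair {α ζ : Ordinal} {a : L} {E : Set S}
    (hζ : (M.adjoinPair s₀ t₀).IsZhou ζ) (hst : (s₀, t₀) ∈ M.Oiter M.eventBisim α)
    (hE : E ∈ sigmaCl (M.Oiter M.eventBisim α)) (hlt : M.τ a t₀ E < M.τ a s₀ E) :
    α + 2 ≤ ζ := by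
  rw [← one_add_one_eq_two, ← add_assoc]
  refine Order.add_one_le_of_lt (hζ.lt_of_mem_Oiter (inr_mem_adjoinPair_Oiter_add_one hst) ?_)
  exact fun hs => inr_notMem_adjoinPair_Oiter_add_two hE hlt (stateBisim_subset_Oiter _ _ hs)

end LMP

/-- If some separable LMP has Zhou ordinal `α + 1`, then there is a separable LMP whose
Zhou ordinal is at least `α + 2`. -/
theorem exists_sepLMP_zhou_ge_succ_succ (α : Ordinal.{0})
    (h : ∃ P : PackedLMP, P.Separable ∧ P.IsZhou (α + 1)) :
    ∃ P' : PackedLMP, P'.Separable ∧ ∃ ζ : Ordinal.{0}, P'.IsZhou ζ ∧ α + 2 ≤ ζ := by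
  obtain ⟨⟨S, mS, L, cL, M⟩, hsep, hzhou⟩ := h
  obtain ⟨s₀, t₀, hst, a, E, hE, hlt⟩ := LMP.IsZhou.exists_τ_lt_of_add_one hzhou
  obtain ⟨ζ, hζ⟩ := (M.adjoinPair s₀ t₀).exists_isZhou
  exact ⟨⟨S ⊕ Bool, inferInstance, L ⊕ Unit, inferInstance, M.adjoinPair s₀ t₀⟩,
    SeparableMeasurableSpace.sum hsep (.of_countable Bool), ζ, hζ,
    LMP.add_two_le_of_isZhou_adjoinPair hζ hst hE hlt⟩
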